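/- arXiv:1503.06425 — 7 statements merged into one kernel-verified Lean document; each statement's English description precedes it below -/
import Mathlib

section
/- Let (X,T) be a dynamical system on a compact metric space. Then (X,T) is weakly mixing (i.e., T × T is topologically transitive on X × X) if and only if for every pair of non-empty open subsets U, V of X the hitting time set N(U,V) = {n ∈ ℕ : T^n U ∩ V ≠ ∅} is thick (contains arbitrarily long runs of consecutive integers). -/
/-!
Weak mixing gives, for any two pairs of non-empty open sets, a common hitting time `n`, and then
(Furstenberg) the hitting times of the single pair `(U₁ ∩ T⁻ⁿ U₂, V₁ ∩ T⁻ⁿ V₂)` are hitting times of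
both pairs. Iterating over the pairs `(U, T⁻ⁱ V)`, `i ≤ n`, whose hitting times are those of
`(U, V)` shifted by `i`, produces a run of length `n` in `N(U, V)`; the sets `T⁻ⁱ V` are non-empty
because a transitive map of a Hausdorff space has dense range.

Conversely, pick `k ∈ N(A, B)`, `l ∈ N(C, D)` and a run `a, …, a + k + l` in
`N(A ∩ T⁻ᵏ B, C ∩ T⁻ˡ D)`; then `a + l` lies in both `N(A, C)` and `N(B, D)`, which is the
transitivity of `T × T` on rectangles.
-/

open Set Function

section

variable {α β : Type*}

def hittingTimes (f : α → α) (U V : Set α) : Set ℕ :=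
  {n | (f^[n] '' U ∩ V).Nonempty}

def IsThick (s : Set ℕ) : Prop :=
  ∀ n, ∃ a, ∀ i ≤ n, a + i ∈ s

section hittingTimes

variable {f : α → α} {U V U' V' : Set α} {n : ℕ}

theorem mem_hittingTimes : n ∈ hittingTimes f U V ↔ ∃ x ∈ U, f^[n] x ∈ V :=
  image_inter_nonempty_iff

theorem hittingTimes_mono (hU : U ⊆ U') (hV : V ⊆ V') :
    hittingTimes f U V ⊆ hittingTimes f U' V' := fun _ hn =>
  hn.mono (inter_subset_inter (image_mono hU) hV)

theorem mem_hittingTimes_preimage_iterate {i : ℕ} :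
    n ∈ hittingTimes f U (f^[i] ⁻¹' V) ↔ n + i ∈ hittingTimes f U V := by
  simp only [mem_hittingTimes, mem_preimage, ← iterate_add_apply, Nat.add_comm i]

theorem hittingTimes_prod (f : α → α) (g : β → β) (A C : Set α) (B D : Set β) :
    hittingTimes (Prod.map f g) (A ×ˢ B) (C ×ˢ D) = hittingTimes f A C ∩ hittingTimes g B D := by
  ext n
  simp only [hittingTimes, Prod.map_iterate, prodMap_image_prod, prod_inter_prod,
    prod_nonempty_iff]
  rfl

theorem IsThick.nonempty {s : Set ℕ} (h : IsThick s) : s.Nonempty :=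
  let ⟨a, ha⟩ := h 0
  ⟨a, ha 0 le_rfl⟩

theorem add_mem_hittingTimes_of_add_mem_inter_preimage {A B C D : Set α} {a k l : ℕ}
    (h : a + k ∈ hittingTimes f (A ∩ f^[k] ⁻¹' B) (C ∩ f^[l] ⁻¹' D)) :
    a + l ∈ hittingTimes f B D := by
  obtain ⟨x, ⟨-, hxB⟩, -, hxD⟩ := mem_hittingTimes.mp h
  refine mem_hittingTimes.mpr ⟨f^[k] x, hxB, ?_⟩
  rwa [mem_preimage, ← iterate_add_apply, show l + (a + k) = a + l + k by omega,
    iterate_add_apply] at hxD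

end hittingTimes

section Transitivity

variable [TopologicalSpace α] [TopologicalSpace β]

def TopologicallyTransitive (f : α → α) : Prop :=
  ∀ U V : Set α, IsOpen U → IsOpen V → U.Nonempty → V.Nonempty → (hittingTimes f U V).Nonempty

theorem topologicallyTransitive_prodMap_iff {f : α → α} {g : β → β} :
    TopologicallyTransitive (Prod.map f g) ↔
      ∀ ⦃A C : Set α⦄ ⦃B D : Set β⦄, IsOpen A → IsOpen C → IsOpen B → IsOpen D →
        A.Nonempty → C.Nonempty → B.Nonempty → D.Nonempty →
          (hittingTimes f A C ∩ hittingTimes g B D).Nonempty := by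
  refine ⟨fun h A C B D hA hC hB hD hAne hCne hBne hDne => ?_, fun h W W' hW hW' hWne hW'ne => ?_⟩
  · rw [← hittingTimes_prod]
    exact h _ _ (hA.prod hB) (hC.prod hD) (hAne.prod hBne) (hCne.prod hDne)
  · obtain ⟨⟨a, b⟩, hab⟩ := hWne
    obtain ⟨⟨c, d⟩, hcd⟩ := hW'ne
    obtain ⟨A, B, hA, hB, ha, hb, hAB⟩ := isOpen_prod_iff.mp hW a b hab
    obtain ⟨C, D, hC, hD, hc, hd, hCD⟩ := isOpen_prod_iff.mp hW' c d hcd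
    refine (h hA hC hB hD ⟨a, ha⟩ ⟨c, hc⟩ ⟨b, hb⟩ ⟨d, hd⟩).mono ?_
    rw [← hittingTimes_prod]
    exact hittingTimes_mono hAB hCD

theorem TopologicallyTransitive.of_prodMap_self {f : α → α}
    (h : TopologicallyTransitive (Prod.map f f)) : TopologicallyTransitive f :=
  fun _ _ hU hV hUne hVne =>
    (topologicallyTransitive_prodMap_iff.mp h hU hV hU hV hUne hVne hUne hVne).mono
      inter_subset_left

/-- A hitting time from an open set into a disjoint one is positive, so it passes through
`range f`. -/
theorem TopologicallyTransitive.denseRange [T2Space α] {f : α → α}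
    (h : TopologicallyTransitive f) : DenseRange f := by
  refine dense_iff_inter_open.mpr fun V hV ⟨v, hv⟩ => ?_
  by_cases hVuniv : V = univ
  · exact ⟨f v, hVuniv ▸ mem_univ _, mem_range_self v⟩
  obtain ⟨z, hz⟩ := (ne_univ_iff_exists_notMem V).mp hVuniv
  obtain ⟨O, O', hO, hO', hvO, hzO', hdisj⟩ := t2_separation (ne_of_mem_of_not_mem hv hz)
  obtain ⟨n, hn⟩ := h O' (V ∩ O) hO' (hV.inter hO) ⟨z, hzO'⟩ ⟨v, hv, hvO⟩
  obtain ⟨x, hxO', hxV, hxO⟩ := mem_hittingTimes.mp hn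
  cases n with
  | zero => exact absurd hxO (hdisj.symm.notMem_of_mem_left hxO')
  | succ m =>
    rw [iterate_succ_apply'] at hxV
    exact ⟨_, hxV, mem_range_self _⟩

theorem DenseRange.iterate {f : α → α} (hd : DenseRange f) (hf : Continuous f) :
    ∀ n, DenseRange f^[n]
  | 0 => denseRange_id
  | n + 1 => by
    rw [iterate_succ']
    exact hd.comp (hd.iterate hf n) hf

end Transitivity

section WeakMixing

variable [TopologicalSpace α] {f : α → α}

theorem exists_hittingTimes_subset_inter (hf : Continuous f)
    (h : TopologicallyTransitive (Prod.map f f)) {U₁ V₁ U₂ V₂ : Set α}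
    (hU₁ : IsOpen U₁) (hV₁ : IsOpen V₁) (hU₂ : IsOpen U₂) (hV₂ : IsOpen V₂)
    (hU₁ne : U₁.Nonempty) (hV₁ne : V₁.Nonempty) (hU₂ne : U₂.Nonempty) (hV₂ne : V₂.Nonempty) :
    ∃ U V, IsOpen U ∧ IsOpen V ∧ U.Nonempty ∧ V.Nonempty ∧
      hittingTimes f U V ⊆ hittingTimes f U₁ V₁ ∩ hittingTimes f U₂ V₂ := by
  obtain ⟨n, hnU, hnV⟩ :=
    topologicallyTransitive_prodMap_iff.mp h hU₁ hU₂ hV₁ hV₂ hU₁ne hU₂ne hV₁ne hV₂ne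
  obtain ⟨x, hxU₁, hxU₂⟩ := mem_hittingTimes.mp hnU
  obtain ⟨y, hyV₁, hyV₂⟩ := mem_hittingTimes.mp hnV
  refine ⟨U₁ ∩ f^[n] ⁻¹' U₂, V₁ ∩ f^[n] ⁻¹' V₂, hU₁.inter (hU₂.preimage (hf.iterate n)),
    hV₁.inter (hV₂.preimage (hf.iterate n)), ⟨x, hxU₁, hxU₂⟩, ⟨y, hyV₁, hyV₂⟩,
    fun m hm => ⟨hittingTimes_mono inter_subset_left inter_subset_left hm, ?_⟩⟩
  obtain ⟨z, ⟨-, hzU₂⟩, -, hzV₂⟩ := mem_hittingTimes.mp hm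
  refine mem_hittingTimes.mpr ⟨f^[n] z, hzU₂, ?_⟩
  rwa [mem_preimage, (Commute.iterate_iterate_self f n m).eq] at hzV₂

theorem exists_hittingTimes_subset_of_le (hf : Continuous f)
    (h : TopologicallyTransitive (Prod.map f f)) {U V : ℕ → Set α}
    (hU : ∀ i, IsOpen (U i)) (hV : ∀ i, IsOpen (V i))
    (hUne : ∀ i, (U i).Nonempty) (hVne : ∀ i, (V i).Nonempty) (n : ℕ) :
    ∃ U' V', IsOpen U' ∧ IsOpen V' ∧ U'.Nonempty ∧ V'.Nonempty ∧
      ∀ i ≤ n, hittingTimes f U' V' ⊆ hittingTimes f (U i) (V i) := by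
  induction n with
  | zero =>
    refine ⟨U 0, V 0, hU 0, hV 0, hUne 0, hVne 0, fun i hi => ?_⟩
    rw [Nat.le_zero.mp hi]
  | succ n ih =>
    obtain ⟨U', V', hU', hV', hU'ne, hV'ne, hsub⟩ := ih
    obtain ⟨U'', V'', hU'', hV'', hU''ne, hV''ne, hsub'⟩ := exists_hittingTimes_subset_inter hf h
      hU' hV' (hU (n + 1)) (hV (n + 1)) hU'ne hV'ne (hUne (n + 1)) (hVne (n + 1))
    refine ⟨U'', V'', hU'', hV'', hU''ne, hV''ne, fun i hi => ?_⟩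
    rcases Nat.le_succ_iff.mp hi with hi | rfl
    · exact (hsub'.trans inter_subset_left).trans (hsub i hi)
    · exact hsub'.trans inter_subset_right

theorem TopologicallyTransitive.isThick_hittingTimes [T2Space α] (hf : Continuous f)
    (h : TopologicallyTransitive (Prod.map f f)) {U V : Set α} (hU : IsOpen U) (hV : IsOpen V)
    (hUne : U.Nonempty) (hVne : V.Nonempty) : IsThick (hittingTimes f U V) := by
  intro n
  have hdense := h.of_prodMap_self.denseRange.iterate hf
  obtain ⟨U', V', hU', hV', hU'ne, hV'ne, hsub⟩ :=
    exists_hittingTimes_subset_of_le hf h (fun _ => hU) (fun i => hV.preimage (hf.iterate i))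
      (fun _ => hUne) (fun i => (hdense i).exists_mem_open hV hVne) n
  obtain ⟨a, ha⟩ := h.of_prodMap_self U' V' hU' hV' hU'ne hV'ne
  exact ⟨a, fun i hi => mem_hittingTimes_preimage_iterate.mp (hsub i hi ha)⟩

theorem topologicallyTransitive_prodMap_of_isThick (hf : Continuous f)
    (h : ∀ U V : Set α, IsOpen U → IsOpen V → U.Nonempty → V.Nonempty →
      IsThick (hittingTimes f U V)) :
    TopologicallyTransitive (Prod.map f f) := by
  refine topologicallyTransitive_prodMap_iff.mpr fun A C B D hA hC hB hD hAne hCne hBne hDne => ?_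
  obtain ⟨k, hk⟩ := (h A B hA hB hAne hBne).nonempty
  obtain ⟨l, hl⟩ := (h C D hC hD hCne hDne).nonempty
  obtain ⟨x, hxA, hxB⟩ := mem_hittingTimes.mp hk
  obtain ⟨y, hyC, hyD⟩ := mem_hittingTimes.mp hl
  obtain ⟨a, ha⟩ := h (A ∩ f^[k] ⁻¹' B) (C ∩ f^[l] ⁻¹' D) (hA.inter (hB.preimage (hf.iterate k)))
    (hC.inter (hD.preimage (hf.iterate l))) ⟨x, hxA, hxB⟩ ⟨y, hyC, hyD⟩ (k + l)
  exact ⟨a + l, hittingTimes_mono inter_subset_left inter_subset_left (ha l (by omega)),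
    add_mem_hittingTimes_of_add_mem_inter_preimage (ha k (by omega))⟩

end WeakMixing

end

theorem weaklyMixing_iff_thick_hitting_sets_general
    {X : Type*} [MetricSpace X]
    (T : X → X) (hT : Continuous T) :
    (∀ U V : Set (X × X), IsOpen U → IsOpen V → U.Nonempty → V.Nonempty →
      ∃ n : ℕ, ((fun p : X × X => (T p.1, T p.2))^[n] '' U ∩ V).Nonempty) ↔
    (∀ U V : Set X, IsOpen U → IsOpen V → U.Nonempty → V.Nonempty →
      ∀ n : ℕ, ∃ a : ℕ, ∀ i ≤ n, (T^[a + i] '' U ∩ V).Nonempty) := by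
  change TopologicallyTransitive (Prod.map T T) ↔ ∀ U V : Set X, IsOpen U → IsOpen V →
    U.Nonempty → V.Nonempty → IsThick (hittingTimes T U V)
  exact ⟨fun h _ _ hU hV hUne hVne => h.isThick_hittingTimes hT hU hV hUne hVne,
    topologicallyTransitive_prodMap_of_isThick hT⟩

theorem weaklyMixing_iff_thick_hitting_sets
    {X : Type*} [MetricSpace X] [CompactSpace X]
    (T : X → X) (hT : Continuous T) :
    (∀ U V : Set (X × X), IsOpen U → IsOpen V → U.Nonempty → V.Nonempty →
      ∃ n : ℕ, ((fun p : X × X => (T p.1, T p.2))^[n] '' U ∩ V).Nonempty) ↔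
    (∀ U V : Set X, IsOpen U → IsOpen V → U.Nonempty → V.Nonempty →
      ∀ n : ℕ, ∃ a : ℕ, ∀ i ≤ n, (T^[a + i] '' U ∩ V).Nonempty) :=
  weaklyMixing_iff_thick_hitting_sets_general T hT
end

section
/- Let (X,T) be a dynamical system on a compact metric space. If (X,T) is topologically transitive and has a dense set of periodic points and X is infinite, then (X,T) is sensitive: there exists δ > 0 such that for every x ∈ X and every ε > 0 there exist y with d(x,y) < ε and n ∈ ℕ with d(T^n x, T^n y) > δ. -/
/-!
Take two periodic points whose (finite) orbits are disjoint, hence `δ`-apart; every `x` is then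
`δ / 2`-far from the whole orbit of one of them, say `w`. Near `x` pick a periodic point `p` of
period `m`, and by transitivity a point `z` near `x` whose `n`-th iterate stays close to the orbit
of `w` for `m` more steps. At a multiple `N` of `m` just after `n` we have `T^[N] p = p` far
from the orbit of `w` and `T^[N] z` close to it, so `T^[N] x` is far
from `T^[N] p` or from `T^[N] z`.
-/

open Function Metric Set

section

variable {X : Type*}

theorem Function.finite_range_iterate_of_mem_periodicPts {f : X → X} {x : X}
    (hx : x ∈ periodicPts f) : (range fun m => f^[m] x).Finite := by
  obtain ⟨n, hn, hxn⟩ := hx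
  refine ((finite_Iio n).image fun m => f^[m] x).subset ?_
  rintro _ ⟨m, rfl⟩
  exact ⟨m % n, Nat.mod_lt m hn, hxn.iterate_mod_apply m⟩

theorem Function.mem_range_iterate_of_iterate_mem {f : X → X} {x y : X}
    (hx : x ∈ periodicPts f) {j : ℕ} (hj : f^[j] x ∈ range fun m => f^[m] y) :
    x ∈ range fun m => f^[m] y := by
  obtain ⟨n, hn, hxn⟩ := hx
  obtain ⟨i, hi⟩ := hj
  have hjn : j ≤ n * j := Nat.le_mul_of_pos_left j hn
  refine ⟨n * j - j + i, ?_⟩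
  dsimp only at hi ⊢
  rw [iterate_add_apply, hi, ← iterate_add_apply, Nat.sub_add_cancel hjn, (hxn.mul_const j).eq]

theorem exists_pos_forall_le_dist_iterate [MetricSpace X] [Infinite X] {T : X → X}
    (hper : Dense (periodicPts T)) :
    ∃ δ > 0, ∃ p q : X, ∀ i j, δ ≤ dist (T^[i] p) (T^[j] q) := by
  obtain ⟨p, hp⟩ := hper.nonempty
  have hA := finite_range_iterate_of_mem_periodicPts hp
  obtain ⟨q, hq, hqA⟩ := hper.exists_mem_open hA.isClosed.isOpen_compl
    hA.infinite_compl.nonempty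
  have hB := finite_range_iterate_of_mem_periodicPts hq
  have hdisj : Disjoint (range fun i => T^[i] p) (range fun j => T^[j] q) := by
    rw [Set.disjoint_left]
    rintro _ ⟨i, rfl⟩ ⟨j, hj⟩
    exact hqA (mem_range_iterate_of_iterate_mem hq ⟨i, hj.symm⟩)
  obtain ⟨r, hr, hsep⟩ := exists_pos_forall_lt_edist hA.isCompact hB.isClosed hdisj
  refine ⟨r, hr, p, q, fun i j => ?_⟩
  have hij := hsep _ ⟨i, rfl⟩ _ ⟨j, rfl⟩
  rw [edist_nndist, ENNReal.coe_lt_coe] at hij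
  exact hij.le

theorem exists_forall_le_dist_iterate [PseudoMetricSpace X] {T : X → X} {δ : ℝ} {p q : X}
    (hpq : ∀ i j, δ ≤ dist (T^[i] p) (T^[j] q)) (x : X) :
    ∃ w, ∀ i, δ / 2 ≤ dist x (T^[i] w) := by
  by_contra! h
  obtain ⟨i, hi⟩ := h p
  obtain ⟨j, hj⟩ := h q
  linarith [hpq i j, dist_triangle_left (T^[i] p) (T^[j] q) x]

theorem exists_mem_dist_iterate_mul_lt [PseudoMetricSpace X] {T : X → X} (hT : Continuous T)
    (htrans : ∀ U V : Set X, IsOpen U → IsOpen V → U.Nonempty → V.Nonempty →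
      ∃ n : ℕ, (T^[n] '' U ∩ V).Nonempty)
    {U : Set X} (hU : IsOpen U) (hUne : U.Nonempty) (w : X) {m : ℕ} (hm : 0 < m)
    {δ : ℝ} (hδ : 0 < δ) : ∃ z ∈ U, ∃ j r, dist (T^[m * j] z) (T^[r] w) < δ := by
  set V := ⋂ i ∈ Iic m, T^[i] ⁻¹' ball (T^[i] w) δ
  have hV : IsOpen V :=
    (finite_Iic m).isOpen_biInter fun i _ => isOpen_ball.preimage (hT.iterate i)
  have hwV : w ∈ V := mem_iInter₂.2 fun i _ => mem_ball_self hδ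
  obtain ⟨n, _, ⟨z, hz, rfl⟩, hzV⟩ := htrans U V hU hV hUne ⟨w, hwV⟩
  have hn : n < m * (n / m + 1) := Nat.lt_mul_div_succ n hm
  have hnm : m * (n / m + 1) ≤ n + m := by
    rw [Nat.mul_succ]; linarith [Nat.mul_div_le n m]
  have hzr := mem_iInter₂.1 hzV (m * (n / m + 1) - n) (mem_Iic.2 (by omega))
  rw [mem_preimage, mem_ball, ← iterate_add_apply, Nat.sub_add_cancel hn.le] at hzr
  exact ⟨z, hz, n / m + 1, _, hzr⟩

theorem exists_dist_iterate_gt_of_dist_iterate_gt [PseudoMetricSpace X] {T : X → X}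
    {x y₁ y₂ : X} {ε δ : ℝ} (h₁ : dist x y₁ < ε) (h₂ : dist x y₂ < ε) {N : ℕ}
    (h : 2 * δ < dist (T^[N] y₁) (T^[N] y₂)) :
    ∃ y, dist x y < ε ∧ ∃ n, δ < dist (T^[n] x) (T^[n] y) := by
  by_contra! H
  linarith [H y₁ h₁ N, H y₂ h₂ N, dist_triangle_left (T^[N] y₁) (T^[N] y₂) (T^[N] x)]

theorem exists_dist_iterate_gt_of_forall_le_dist [PseudoMetricSpace X] {T : X → X}
    (hT : Continuous T)
    (htrans : ∀ U V : Set X, IsOpen U → IsOpen V → U.Nonempty → V.Nonempty →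
      ∃ n : ℕ, (T^[n] '' U ∩ V).Nonempty)
    (hper : Dense (periodicPts T)) {δ : ℝ} (hδ : 0 < δ) {x w : X}
    (hw : ∀ i, δ ≤ dist x (T^[i] w)) {ε : ℝ} (hε : 0 < ε) :
    ∃ y, dist x y < ε ∧ ∃ n, δ / 4 < dist (T^[n] x) (T^[n] y) := by
  have hδ₄ : 0 < δ / 4 := by positivity
  obtain ⟨p, ⟨m, hm, hp⟩, hxp⟩ := hper.exists_dist_lt x (lt_min hε hδ₄)
  obtain ⟨z, hz, j, r, hzw⟩ := exists_mem_dist_iterate_mul_lt hT htrans isOpen_ball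
    ⟨x, mem_ball_self (lt_min hε hδ₄)⟩ w hm hδ₄
  rw [mem_ball, dist_comm] at hz
  refine exists_dist_iterate_gt_of_dist_iterate_gt (N := m * j)
    (hxp.trans_le (min_le_left _ _)) (hz.trans_le (min_le_left _ _)) ?_
  rw [(hp.mul_const j).eq]
  linarith [hw r, min_le_right ε (δ / 4), dist_triangle x p (T^[r] w),
    dist_triangle p (T^[m * j] z) (T^[r] w)]

end

theorem banks_devaney_sensitive_general
    {X : Type*} [MetricSpace X]
    (T : X → X) (hT : Continuous T)
    (htrans : ∀ U V : Set X, IsOpen U → IsOpen V → U.Nonempty → V.Nonempty →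
      ∃ n : ℕ, (T^[n] '' U ∩ V).Nonempty)
    (hper : Dense {p : X | ∃ k : ℕ, 1 ≤ k ∧ T^[k] p = p})
    (hinf : (Set.univ : Set X).Infinite) :
    ∃ δ > 0, ∀ x : X, ∀ ε > 0, ∃ y : X, dist x y < ε ∧
      ∃ n : ℕ, dist (T^[n] x) (T^[n] y) > δ := by
  have : Infinite X := infinite_univ_iff.1 hinf
  obtain ⟨δ, hδ, p, q, hpq⟩ := exists_pos_forall_le_dist_iterate (T := T) hper
  refine ⟨δ / 2 / 4, by positivity, fun x ε hε => ?_⟩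
  obtain ⟨w, hw⟩ := exists_forall_le_dist_iterate hpq x
  exact exists_dist_iterate_gt_of_forall_le_dist hT htrans hper (by positivity) hw hε

theorem banks_devaney_sensitive
    {X : Type*} [MetricSpace X] [CompactSpace X]
    (T : X → X) (hT : Continuous T)
    (htrans : ∀ U V : Set X, IsOpen U → IsOpen V → U.Nonempty → V.Nonempty →
      ∃ n : ℕ, (T^[n] '' U ∩ V).Nonempty)
    (hper : Dense {p : X | ∃ k : ℕ, 1 ≤ k ∧ T^[k] p = p})
    (hinf : (Set.univ : Set X).Infinite) :
    ∃ δ > 0, ∀ x : X, ∀ ε > 0, ∃ y : X, dist x y < ε ∧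
      ∃ n : ℕ, dist (T^[n] x) (T^[n] y) > δ :=
  banks_devaney_sensitive_general T hT htrans hper hinf
end

section
/- Let (X,T) be a minimal dynamical system on a compact metric space. Then (X,T) is either equicontinuous (the family {T^n : n ≥ 0} is uniformly equicontinuous) or sensitive (there exists δ > 0 such that every non-empty open set contains two points whose orbits are separated by more than δ at some time). -/
/-!
If the system is not sensitive, then for every `c > 0` some ball `B(x₀, η)` consists of points
whose orbits stay `c`-close to that of `x₀`. By minimality the orbit of any `x` enters this ball at
some time `m`; by continuity of `T^[m]` so do the orbits of all points near `x`, and from then on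
both orbits shadow the orbit of `x₀`, while the finitely many earlier iterates are continuous.
Hence the iterates are equicontinuous at every point, and compactness makes this uniform.
-/

open Filter Metric Topology

theorem eventually_forall_dist_iterate_le_of_stable {X : Type*} [PseudoMetricSpace X]
    {T : X → X} (hT : Continuous T) {x₀ x : X} {η c : ℝ} (hc : 0 < c)
    (hstable : ∀ y, dist x₀ y < η → ∀ n, dist (T^[n] x₀) (T^[n] y) ≤ c)
    {m : ℕ} (hm : dist x₀ (T^[m] x) < η) :
    ∀ᶠ y in 𝓝 x, ∀ n, dist (T^[n] x) (T^[n] y) ≤ 2 * c := by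
  have early : ∀ᶠ y in 𝓝 x, ∀ n ∈ Finset.range m, T^[n] y ∈ ball (T^[n] x) (2 * c) :=
    (Finset.eventually_all _).2 fun n _ ↦
      (hT.iterate n).continuousAt.preimage_mem_nhds (ball_mem_nhds _ (by positivity))
  have late : ∀ᶠ y in 𝓝 x, T^[m] y ∈ ball x₀ η :=
    (hT.iterate m).continuousAt.preimage_mem_nhds (isOpen_ball.mem_nhds (mem_ball'.2 hm))
  filter_upwards [early, late] with y hy_early hy_late n
  rcases lt_or_ge n m with hn | hn
  · exact (mem_ball'.1 (hy_early n (Finset.mem_range.2 hn))).le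
  obtain ⟨j, rfl⟩ := Nat.exists_eq_add_of_le' hn
  rw [Function.iterate_add_apply, Function.iterate_add_apply]
  calc dist (T^[j] (T^[m] x)) (T^[j] (T^[m] y))
      ≤ dist (T^[j] x₀) (T^[j] (T^[m] x)) + dist (T^[j] x₀) (T^[j] (T^[m] y)) :=
        dist_triangle_left _ _ _
    _ ≤ c + c := add_le_add (hstable _ hm j) (hstable _ (mem_ball'.1 hy_late) j)
    _ = 2 * c := by ring

theorem equicontinuous_iterate_of_forall_stable {X : Type*} [PseudoMetricSpace X]
    {T : X → X} (hT : Continuous T) (hmin : ∀ x : X, Dense {y : X | ∃ n : ℕ, y = T^[n] x})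
    (hstable : ∀ c > 0, ∃ x₀ : X, ∃ η > 0, ∀ y, dist x₀ y < η → ∀ n : ℕ,
      dist (T^[n] x₀) (T^[n] y) ≤ c) :
    Equicontinuous fun n : ℕ ↦ T^[n] := by
  intro x
  rw [equicontinuousAt_iff_right]
  intro ε hε
  obtain ⟨x₀, η, hη, hx₀⟩ := hstable (ε / 3) (by positivity)
  obtain ⟨_, ⟨m, rfl⟩, hm⟩ := (hmin x).exists_mem_open isOpen_ball ⟨x₀, mem_ball_self hη⟩
  filter_upwards [eventually_forall_dist_iterate_le_of_stable hT (by positivity) hx₀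
    (mem_ball'.1 hm)] with y hy n
  linarith [hy n]

theorem minimal_equicontinuous_or_sensitive
    {X : Type*} [MetricSpace X] [CompactSpace X]
    (T : X → X) (hT : Continuous T)
    (hmin : ∀ x : X, Dense {y : X | ∃ n : ℕ, y = T^[n] x}) :
    (∀ ε > 0, ∃ δ > 0, ∀ x y : X, dist x y < δ → ∀ n : ℕ, dist (T^[n] x) (T^[n] y) < ε) ∨
    (∃ δ > 0, ∀ x : X, ∀ ε > 0, ∃ y : X, dist x y < ε ∧
      ∃ n : ℕ, dist (T^[n] x) (T^[n] y) > δ) := by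
  refine or_iff_not_imp_right.2 fun hsens ↦ ?_
  push Not at hsens
  exact uniformEquicontinuous_iff.1 <| CompactSpace.uniformEquicontinuous_of_equicontinuous <|
    equicontinuous_iterate_of_forall_stable hT hmin hsens
end

section
/- Let (X,T) be a transitive dynamical system on a compact metric space. If some point of X is an equicontinuity point, then the set of equicontinuity points coincides with the set of transitive points; otherwise (X,T) is sensitive. -/
/-!
For `ε > 0` let `A_ε = stablePoints T ε` be the open set of points having a neighbourhood all of
whose orbits stay pairwise `ε`-close; the equicontinuity points are exactly `⋂ A_ε`. By continuity
of `T`, a point lies in `A_ε` as soon as some iterate of it does, so transitivity makes every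
nonempty `A_ε` dense. Hence an orbit dense in `X` enters each `A_ε` once one equicontinuity point
exists, making its starting point an equicontinuity point; conversely the orbit of an
equicontinuity point shadows the orbits of nearby points, which by transitivity visit every open
set. If `T` is not sensitive, every `A_ε` is nonempty, hence dense, and Baire's theorem produces an
equicontinuity point in `⋂ A_ε`.
-/

open Metric Set Filter Topology

section

variable {X : Type*} [TopologicalSpace X] (T : X → X)

def IsTopologicallyTransitive : Prop :=
  ∀ U V : Set X, IsOpen U → IsOpen V → U.Nonempty → V.Nonempty →
    ∃ n : ℕ, (T^[n] '' U ∩ V).Nonempty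

end

section

variable {X : Type*} [PseudoMetricSpace X] (T : X → X)

def IsSensitive : Prop :=
  ∃ δ > 0, ∀ x : X, ∀ ε > 0, ∃ y : X, dist x y < ε ∧
    ∃ n : ℕ, dist (T^[n] x) (T^[n] y) > δ

def stablePoints (ε : ℝ) : Set X :=
  {x | ∃ U ∈ 𝓝 x, ∀ y ∈ U, ∀ z ∈ U, ∀ n : ℕ, dist (T^[n] y) (T^[n] z) < ε}

theorem equicontinuousAt_iterate_iff_forall_mem_stablePoints {x : X} :
    EquicontinuousAt (fun n : ℕ => T^[n]) x ↔ ∀ ε > 0, x ∈ stablePoints T ε :=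
  Metric.equicontinuousAt_iff_pair

theorem equicontinuousAt_iterate_iff_dist_lt {x : X} :
    EquicontinuousAt (fun n : ℕ => T^[n]) x ↔
      ∀ ε > 0, ∃ δ > 0, ∀ y : X, dist x y < δ → ∀ n : ℕ, dist (T^[n] x) (T^[n] y) < ε := by
  simp only [Metric.equicontinuousAt_iff, dist_comm x]

theorem stablePoints_mono {ε ε' : ℝ} (h : ε ≤ ε') : stablePoints T ε ⊆ stablePoints T ε' :=
  fun _ ⟨U, hU, hUε⟩ => ⟨U, hU, fun y hy z hz n => (hUε y hy z hz n).trans_le h⟩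

theorem isOpen_stablePoints (ε : ℝ) : IsOpen (stablePoints T ε) := by
  refine isOpen_iff_mem_nhds.2 fun x ⟨U, hU, hUε⟩ => ?_
  filter_upwards [eventually_eventually_nhds.2 hU] with x' hx' using ⟨U, hx', hUε⟩

theorem mem_stablePoints_of_iterate_mem (hT : Continuous T) {x : X} {m : ℕ} {ε : ℝ}
    (hε : 0 < ε) (h : T^[m] x ∈ stablePoints T ε) : x ∈ stablePoints T ε := by
  obtain ⟨U, hU, hUε⟩ := h
  have hhead : ∀ᶠ y in 𝓝 x, ∀ k ∈ Iio m, dist (T^[k] y) (T^[k] x) < ε / 2 :=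
    (eventually_all_finite (finite_Iio m)).2 fun k _ =>
      (hT.iterate k).continuousAt.eventually (ball_mem_nhds _ (half_pos hε))
  have htail : ∀ᶠ y in 𝓝 x, T^[m] y ∈ U := (hT.iterate m).continuousAt.preimage_mem_nhds hU
  refine ⟨_, hhead.and htail, ?_⟩
  rintro y ⟨hy, hyU⟩ z ⟨hz, hzU⟩ n
  rcases lt_or_ge n m with hn | hn
  · calc dist (T^[n] y) (T^[n] z) ≤ dist (T^[n] y) (T^[n] x) + dist (T^[n] z) (T^[n] x) :=
          dist_triangle_right _ _ _
      _ < ε := by linarith [hy n hn, hz n hn]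
  · obtain ⟨j, rfl⟩ := Nat.exists_eq_add_of_le' hn
    simpa only [Function.iterate_add_apply] using hUε _ hyU _ hzU j

theorem nonempty_stablePoints_of_not_isSensitive (h : ¬IsSensitive T) {ε : ℝ} (hε : 0 < ε) :
    (stablePoints T ε).Nonempty := by
  unfold IsSensitive at h
  push Not at h
  obtain ⟨x, ρ, hρ, hx⟩ := h (ε / 3) (by positivity)
  refine ⟨x, ball x ρ, ball_mem_nhds x hρ, fun y hy z hz n => ?_⟩
  calc dist (T^[n] y) (T^[n] z) ≤ dist (T^[n] x) (T^[n] y) + dist (T^[n] x) (T^[n] z) :=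
        dist_triangle_left _ _ _
    _ < ε := by linarith [hx y (mem_ball'.1 hy) n, hx z (mem_ball'.1 hz) n]

theorem equicontinuousAt_iterate_of_dense_orbit (hT : Continuous T) {x₀ x : X}
    (hx₀ : EquicontinuousAt (fun n : ℕ => T^[n]) x₀) (hx : Dense {y : X | ∃ n : ℕ, y = T^[n] x}) :
    EquicontinuousAt (fun n : ℕ => T^[n]) x := by
  rw [equicontinuousAt_iterate_iff_forall_mem_stablePoints] at hx₀ ⊢
  intro ε hε
  obtain ⟨_, hmA, m, rfl⟩ :=
    hx.inter_open_nonempty _ (isOpen_stablePoints T ε) ⟨x₀, hx₀ ε hε⟩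
  exact mem_stablePoints_of_iterate_mem T hT hε hmA

namespace IsTopologicallyTransitive

variable {T}

theorem dense_orbit_of_equicontinuousAt (htr : IsTopologicallyTransitive T) {x : X}
    (hx : EquicontinuousAt (fun n : ℕ => T^[n]) x) : Dense {y : X | ∃ n : ℕ, y = T^[n] x} := by
  refine Metric.dense_iff.2 fun v r hr => ?_
  obtain ⟨δ, hδ, hxδ⟩ := Metric.equicontinuousAt_iff.1 hx (r / 2) (half_pos hr)
  obtain ⟨n, _, ⟨y, hy, rfl⟩, hyv⟩ := htr (ball x δ) (ball v (r / 2)) isOpen_ball isOpen_ball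
    ⟨x, mem_ball_self hδ⟩ ⟨v, mem_ball_self (half_pos hr)⟩
  refine ⟨T^[n] x, ?_, n, rfl⟩
  calc dist (T^[n] x) v ≤ dist (T^[n] x) (T^[n] y) + dist (T^[n] y) v := dist_triangle _ _ _
    _ < r := by linarith [hxδ y (mem_ball.1 hy) n, mem_ball.1 hyv]

theorem dense_stablePoints (htr : IsTopologicallyTransitive T) (hT : Continuous T) {ε : ℝ}
    (hε : 0 < ε) (hne : (stablePoints T ε).Nonempty) : Dense (stablePoints T ε) := by
  refine dense_iff_inter_open.2 fun U hU hUne => ?_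
  obtain ⟨n, _, ⟨w, hwU, rfl⟩, hwA⟩ := htr U _ hU (isOpen_stablePoints T ε) hUne hne
  exact ⟨w, hwU, mem_stablePoints_of_iterate_mem T hT hε hwA⟩

theorem exists_equicontinuousAt_iterate [BaireSpace X] (htr : IsTopologicallyTransitive T)
    (hT : Continuous T) (h : ∀ ε > 0, (stablePoints T ε).Nonempty) :
    ∃ x, EquicontinuousAt (fun n : ℕ => T^[n]) x := by
  have hdense : Dense (⋂ k : ℕ, stablePoints T (1 / (k + 1))) :=
    dense_iInter_of_isOpen_nat (fun k => isOpen_stablePoints T _) fun k =>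
      htr.dense_stablePoints hT Nat.one_div_pos_of_nat (h _ Nat.one_div_pos_of_nat)
  have : Nonempty X := (h 1 one_pos).to_subtype.map Subtype.val
  obtain ⟨x, hx⟩ := hdense.nonempty
  refine ⟨x, (equicontinuousAt_iterate_iff_forall_mem_stablePoints T).2 fun ε hε => ?_⟩
  obtain ⟨k, hk⟩ := exists_nat_one_div_lt hε
  exact stablePoints_mono T hk.le (mem_iInter.1 hx k)

end IsTopologicallyTransitive

end

theorem transitive_dichotomy_equicontinuity_points
    {X : Type*} [MetricSpace X] [CompactSpace X]
    (T : X → X) (hT : Continuous T)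
    (htrans : ∀ U V : Set X, IsOpen U → IsOpen V → U.Nonempty → V.Nonempty →
      ∃ n : ℕ, (T^[n] '' U ∩ V).Nonempty) :
    ((∃ x : X, ∀ ε > 0, ∃ δ > 0, ∀ y : X, dist x y < δ →
        ∀ n : ℕ, dist (T^[n] x) (T^[n] y) < ε) →
      {x : X | ∀ ε > 0, ∃ δ > 0, ∀ y : X, dist x y < δ →
        ∀ n : ℕ, dist (T^[n] x) (T^[n] y) < ε} =
      {x : X | Dense {y : X | ∃ n : ℕ, y = T^[n] x}}) ∧
    ((¬ ∃ x : X, ∀ ε > 0, ∃ δ > 0, ∀ y : X, dist x y < δ →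
        ∀ n : ℕ, dist (T^[n] x) (T^[n] y) < ε) →
      ∃ δ > 0, ∀ x : X, ∀ ε > 0, ∃ y : X, dist x y < ε ∧
        ∃ n : ℕ, dist (T^[n] x) (T^[n] y) > δ) := by
  have htr : IsTopologicallyTransitive T := htrans
  simp only [← equicontinuousAt_iterate_iff_dist_lt]
  refine ⟨fun ⟨x₀, hx₀⟩ => Set.ext fun x => ⟨htr.dense_orbit_of_equicontinuousAt,
    equicontinuousAt_iterate_of_dense_orbit T hT hx₀⟩, fun hno => ?_⟩
  by_contra hsens
  exact hno (htr.exists_equicontinuousAt_iterate hT fun ε hε =>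
    nonempty_stablePoints_of_not_isSensitive T hsens hε)
end

section
/- Let (X,T) be a dynamical system on a compact metric space. For every δ > 0, the whole space X cannot be a δ-scrambled set (if X has at least two points, there exist two distinct points x, y ∈ X with limsup_{n→∞} d(T^n x, T^n y) ≤ δ or not forming a δ-scrambled pair). -/
/-!
A δ-scrambled space has a fixed point `p`: the pairs `(a, T a)` are proximal, so
`x ↦ dist x (T x)` has infimum, hence minimum, zero. Every orbit then comes arbitrarily close
to `p` but keeps returning to the compact set `S = {y | δ ≤ dist y p}`. By compactness the return
times from `S` are bounded by some `N`, so an orbit starting in `S` visits `S` in every window of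
length `N`. Points close enough to the fixed point `p` stay away from `S` for `N` steps,
a contradiction.
-/

open Filter Function Set Metric Topology

section

variable {X : Type*} {T : X → X}

section Topological

variable [TopologicalSpace X]

theorem IsCompact.exists_forall_exists_le_iterate_mem (hT : Continuous T) {S U : Set X}
    (hS : IsCompact S) (hU : IsOpen U) (hret : ∀ y ∈ S, ∃ n, T^[n + 1] y ∈ U) :
    ∃ N, ∀ y ∈ S, ∃ n ≤ N, T^[n + 1] y ∈ U := by
  obtain ⟨N, hN⟩ := hS.elim_directed_cover (fun N => ⋃ n ∈ Iic N, T^[n + 1] ⁻¹' U)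
    (fun N => isOpen_biUnion fun n _ => hU.preimage (hT.iterate (n + 1)))
    (fun y hy => mem_iUnion.2 (let ⟨n, hn⟩ := hret y hy; ⟨n, mem_biUnion self_mem_Iic hn⟩))
    (Monotone.directed_le fun N M hNM => biUnion_mono (Iic_subset_Iic.2 hNM) fun _ _ => subset_rfl)
  exact ⟨N, fun y hy => by simpa using hN hy⟩

theorem Function.IsFixedPt.eventually_forall_le_iterate_mem (hT : Continuous T) {p : X}
    (hp : IsFixedPt T p) {V : Set X} (hV : V ∈ 𝓝 p) (N : ℕ) :
    ∀ᶠ y in 𝓝 p, ∀ k ≤ N, T^[k] y ∈ V :=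
  (eventually_all_finite (finite_le_nat N)).2 fun k _ =>
    (hT.iterate k).continuousAt.preimage_mem_nhds ((hp.iterate k).eq.symm ▸ hV)

end Topological

theorem exists_le_iterate_add_mem {S : Set X} {N : ℕ}
    (hret : ∀ y ∈ S, ∃ n ≤ N, T^[n + 1] y ∈ S) {x : X} (hx : x ∈ S) (u : ℕ) :
    ∃ k ≤ N, T^[k + u] x ∈ S := by
  induction u with
  | zero => exact ⟨0, N.zero_le, hx⟩
  | succ u ih =>
    obtain ⟨_ | k, hk, hkS⟩ := ih
    · rw [Nat.zero_add] at hkS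
      obtain ⟨n, hn, hnS⟩ := hret _ hkS
      exact ⟨n, hn, by rwa [show n + (u + 1) = n + 1 + u by omega, iterate_add_apply]⟩
    · exact ⟨k, by omega, by rwa [Nat.add_right_comm, Nat.add_assoc] at hkS⟩

theorem Function.IsFixedPt.exists_mem_nhds_forall_iterate_notMem [TopologicalSpace X]
    (hT : Continuous T) {p : X} (hp : IsFixedPt T p) {S : Set X} (hS : IsClosed S) (hpS : p ∉ S)
    {N : ℕ} (hret : ∀ y ∈ S, ∃ n ≤ N, T^[n + 1] y ∈ S) {x : X} (hx : x ∈ S) :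
    ∃ V ∈ 𝓝 p, ∀ n, T^[n] x ∉ V := by
  refine ⟨_, hp.eventually_forall_le_iterate_mem hT (hS.isOpen_compl.mem_nhds hpS) N,
    fun u hu => ?_⟩
  obtain ⟨k, hk, hkS⟩ := exists_le_iterate_add_mem hret hx u
  exact hu k hk (by rwa [iterate_add_apply] at hkS)

section PseudoMetric

variable [PseudoMetricSpace X]

def IsScrambledPair (T : X → X) (δ : ℝ) (x y : X) : Prop :=
  liminf (fun n => dist (T^[n] x) (T^[n] y)) atTop = 0 ∧
    limsup (fun n => dist (T^[n] x) (T^[n] y)) atTop > δ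

variable {δ : ℝ}

theorem IsScrambledPair.frequently_dist_lt [BoundedSpace X] {x y : X}
    (h : IsScrambledPair T δ x y) {ε : ℝ} (hε : 0 < ε) :
    ∃ᶠ n in atTop, dist (T^[n] x) (T^[n] y) < ε :=
  frequently_lt_of_liminf_lt (isCoboundedUnder_ge_of_le _ fun _ =>
    dist_le_diam_of_mem (Bornology.isBounded_univ.2 ‹_›) (mem_univ _) (mem_univ _)) (h.1 ▸ hε)

theorem IsScrambledPair.frequently_lt_dist {x y : X} (h : IsScrambledPair T δ x y) :
    ∃ᶠ n in atTop, δ < dist (T^[n] x) (T^[n] y) :=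
  frequently_lt_of_lt_limsup (isCoboundedUnder_le_of_le _ fun _ => dist_nonneg) h.2

end PseudoMetric

section Metric

variable [MetricSpace X] [CompactSpace X] {δ : ℝ}

theorem Continuous.exists_isFixedPt_of_forall_exists_dist_lt [Nonempty X] (hT : Continuous T)
    (h : ∀ ε > 0, ∃ x, dist x (T x) < ε) : ∃ p, IsFixedPt T p := by
  obtain ⟨p, -, hmin⟩ := isCompact_univ.exists_isMinOn univ_nonempty
    (continuous_id.dist hT).continuousOn
  refine ⟨p, (dist_eq_zero.1 <| le_antisymm (not_lt.1 fun hpos => ?_) dist_nonneg).symm⟩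
  obtain ⟨x, hx⟩ := h _ hpos
  exact (hmin (mem_univ x)).not_gt hx

theorem Continuous.exists_isFixedPt_of_isScrambledPair [Nonempty X] (hT : Continuous T)
    (h : ∀ x, T x ≠ x → IsScrambledPair T δ x (T x)) : ∃ p, IsFixedPt T p := by
  refine hT.exists_isFixedPt_of_forall_exists_dist_lt fun ε hε => ?_
  obtain ⟨a⟩ := ‹Nonempty X›
  by_cases ha : T a = a
  · exact ⟨a, by rwa [ha, dist_self]⟩
  · obtain ⟨n, hn⟩ := ((h a ha).frequently_dist_lt hε).exists
    exact ⟨T^[n] a, by rwa [← iterate_succ_apply' T, iterate_succ_apply]⟩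

theorem Function.IsFixedPt.exists_not_isScrambledPair (hT : Continuous T) {p q : X}
    (hp : IsFixedPt T p) (hδ : 0 < δ) (hq : q ≠ p) : ∃ y ≠ p, ¬ IsScrambledPair T δ y p := by
  by_contra! h
  have hfar : ∀ y ≠ p, ∃ᶠ n in atTop, δ < dist (T^[n] y) p := fun y hy => by
    simpa only [(hp.iterate _).eq] using (h y hy).frequently_lt_dist
  set S := {y | δ ≤ dist y p}
  have hS : IsClosed S := isClosed_le continuous_const (continuous_id.dist continuous_const)
  have hpS : p ∉ S := by simpa [S] using hδ
  have hne : ∀ y ∈ S, y ≠ p := fun y hy hyp => hpS (hyp ▸ hy)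
  have hU : IsOpen {y | δ < dist y p} :=
    isOpen_lt continuous_const (continuous_id.dist continuous_const)
  have hUS : {y | δ < dist y p} ⊆ S := fun y (hy : δ < dist y p) => show δ ≤ dist y p from hy.le
  obtain ⟨N, hN⟩ := hS.isCompact.exists_forall_exists_le_iterate_mem hT hU fun y hy => by
    obtain ⟨_ | n, hn, hnU⟩ := frequently_atTop.1 (hfar y (hne y hy)) 1
    · omega
    · exact ⟨n, hnU⟩
  obtain ⟨m, hm⟩ := (hfar q hq).exists
  obtain ⟨V, hV, hxV⟩ := hp.exists_mem_nhds_forall_iterate_notMem hT hS hpS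
    (fun y hy => (hN y hy).imp fun _ => And.imp_right (@hUS _)) hm.le
  obtain ⟨ε, hε, hball⟩ := Metric.mem_nhds_iff.1 hV
  obtain ⟨n, hn⟩ := ((h _ (hne _ hm.le)).frequently_dist_lt hε).exists
  exact hxV n (hball (by rwa [(hp.iterate n).eq] at hn))

end Metric

end

theorem whole_space_not_delta_scrambled
    {X : Type*} [MetricSpace X] [CompactSpace X]
    (T : X → X) (hT : Continuous T) (δ : ℝ) (hδ : 0 < δ)
    (h2 : ∃ a b : X, a ≠ b) :
    ∃ x y : X, x ≠ y ∧
      ¬ (Filter.liminf (fun n : ℕ => dist (T^[n] x) (T^[n] y)) Filter.atTop = 0 ∧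
         Filter.limsup (fun n : ℕ => dist (T^[n] x) (T^[n] y)) Filter.atTop > δ) := by
  by_contra! h
  have : Nontrivial X := let ⟨a, b, hab⟩ := h2; ⟨a, b, hab⟩
  obtain ⟨p, hp⟩ := hT.exists_isFixedPt_of_isScrambledPair fun x hx => h x (T x) hx.symm
  obtain ⟨q, hq⟩ := exists_ne p
  obtain ⟨y, hy, hns⟩ := hp.exists_not_isScrambledPair hT hδ hq
  exact hns (h y p hy)
end

section
/- (Mycielski theorem, version) Let X be a perfect compact metric space and n ≥ 1. If R is a dense G_δ subset of X^n, then there exists a dense subset K ⊆ X which is a countable union of Cantor sets such that for any n pairwise distinct points x_1,…,x_n ∈ K, the tuple (x_1,…,x_n) lies in R. -/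
/-!
Write `R = ⋂ q, V q` with `V q` open and dense. We build levels of finitely many pairwise disjoint
nonempty open sets: at level `m + 1` each set of level `m` gets two children whose closures it
contains, and one new set is born inside the `m`-th member `O m` of a countable π-base. Sets of
level `m + 1` have diameter at most `1 / (m + 1)`, and the product of any `n` distinct ones lies in
`V 0 ∩ ⋯ ∩ V m`. A refinement step is possible because in a perfect space one can pick distinct
points in prescribed open sets, and because each of the finitely many products of small balls
around them meets the dense open target and can be shrunk into it in turn.

The branches below the set born at level `i + 1` form a Cantor scheme whose limit set is the `i`-th
Cantor set; it meets `O i`, so the union is dense. Distinct points of the union eventually lie in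
distinct sets of a common level, hence an injective tuple lies in every `V q`.
-/

open Set Function Filter Topology Metric
open scoped ENNReal Finset

theorem exists_injective_forall_mem_of_isOpen {X : Type*} [TopologicalSpace X] [T1Space X]
    [PerfectSpace X] {σ : Type*} [Finite σ] {O : σ → Set X} (hO : ∀ s, IsOpen (O s))
    (hne : ∀ s, (O s).Nonempty) : ∃ x : σ → X, Injective x ∧ ∀ s, x s ∈ O s := by
  classical
  have := Fintype.ofFinite σ
  have hinf : ∀ s, (O s).Infinite := fun s =>
    let ⟨x, hx⟩ := hne s
    infinite_of_mem_nhds x ((hO s).mem_nhds hx)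
  choose T hTO hTcard using fun s => (hinf s).exists_subset_card_eq (Fintype.card σ)
  obtain ⟨x, hinj, hxT⟩ := (Finset.all_card_le_biUnion_card_iff_exists_injective T).1 fun A => by
    rcases A.eq_empty_or_nonempty with rfl | ⟨s, hs⟩
    · simp
    · calc #A ≤ Fintype.card σ := A.card_le_univ
        _ = #(T s) := (hTcard s).symm
        _ ≤ #(A.biUnion T) := Finset.card_le_card (Finset.subset_biUnion_of_mem T hs)
  exact ⟨x, hinj, fun s => hTO s (hxT s)⟩

section Shrink

variable {X ι κ : Type*} [TopologicalSpace X] [Finite κ] {W : Set (κ → X)}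

theorem exists_subsets_pi_subset_of_dense (hWo : IsOpen W) (hWd : Dense W) {U : ι → Set X}
    (hUo : ∀ j, IsOpen (U j)) (hUne : ∀ j, (U j).Nonempty) {t : κ → ι} (ht : Injective t) :
    ∃ V : ι → Set X, (∀ j, IsOpen (V j)) ∧ (∀ j, (V j).Nonempty) ∧ (∀ j, V j ⊆ U j) ∧
      univ.pi (V ∘ t) ⊆ W := by
  have hpi : IsOpen (univ.pi (U ∘ t)) := isOpen_set_pi finite_univ fun k _ => hUo (t k)
  obtain ⟨y, hyU, hyW⟩ :=
    hWd.inter_open_nonempty _ hpi (univ_pi_nonempty_iff.2 fun k => hUne (t k))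
  obtain ⟨B, hB, hBW⟩ := isOpen_pi_iff'.1 (hWo.inter hpi) y ⟨hyW, hyU⟩
  refine ⟨fun j => U j ∩ ⋂ (k) (_ : t k = j), B k, fun j => ?_, fun j => ?_,
    fun j => inter_subset_left, fun z hz => (hBW fun k _ => ?_).1⟩
  · exact (hUo j).inter (isOpen_iInter_of_finite fun k => isOpen_iInter_of_finite fun _ => (hB k).1)
  · by_cases h : ∃ k, t k = j
    · obtain ⟨k, rfl⟩ := h
      exact ⟨y k, hyU k trivial, mem_iInter₂.2 fun k' hk' => ht hk' ▸ (hB k').2⟩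
    · obtain ⟨z, hz⟩ := hUne j
      exact ⟨z, hz, mem_iInter₂.2 fun k hk => absurd ⟨k, hk⟩ h⟩
  · exact mem_iInter₂.1 (hz k trivial).2 k rfl

theorem exists_subsets_forall_pi_subset_of_dense (hWo : IsOpen W) (hWd : Dense W)
    {U : ι → Set X} (hUo : ∀ j, IsOpen (U j)) (hUne : ∀ j, (U j).Nonempty)
    {T : Set (κ → ι)} (hT : T.Finite) (hTinj : ∀ t ∈ T, Injective t) :
    ∃ V : ι → Set X, (∀ j, IsOpen (V j)) ∧ (∀ j, (V j).Nonempty) ∧ (∀ j, V j ⊆ U j) ∧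
      ∀ t ∈ T, univ.pi (V ∘ t) ⊆ W := by
  induction T, hT using Set.Finite.induction_on with
  | empty => exact ⟨U, hUo, hUne, fun _ => subset_rfl, by simp⟩
  | @insert t T _ _ ih =>
    obtain ⟨V, hVo, hVne, hVU, hVW⟩ := ih fun t' ht' => hTinj t' (mem_insert_of_mem t ht')
    obtain ⟨V', hV'o, hV'ne, hV'V, hV'W⟩ :=
      exists_subsets_pi_subset_of_dense hWo hWd hVo hVne (hTinj t (mem_insert t T))
    refine ⟨V', hV'o, hV'ne, fun j => (hV'V j).trans (hVU j), ?_⟩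
    rintro t' (rfl | ht')
    · exact hV'W
    · exact (pi_mono fun k _ => hV'V (t' k)).trans (hVW t' ht')

end Shrink

theorem dense_biInter_le_of_isOpen {X : Type*} [TopologicalSpace X] {V : ℕ → Set X}
    (hVo : ∀ q, IsOpen (V q)) (hVd : ∀ q, Dense (V q)) (m : ℕ) : Dense (⋂ q ≤ m, V q) := by
  induction m with
  | zero => simpa using hVd 0
  | succ m ih =>
    rw [Set.biInter_le_succ]
    exact ih.inter_of_isOpen_left (hVd _) ((finite_Iic m).isOpen_biInter fun q _ => hVo q)

section Refinement

variable {X σ κ : Type*} [MetricSpace X]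

structure IsRefinement (W : Set (κ → X)) (ε : ℝ≥0∞) (O U : σ → Set X) : Prop where
  isOpen : ∀ s, IsOpen (U s)
  nonempty : ∀ s, (U s).Nonempty
  pairwise_disjoint : Pairwise (Disjoint on U)
  ediam_le : ∀ s, ediam (U s) ≤ ε
  closure_subset : ∀ s, closure (U s) ⊆ O s
  pi_subset : ∀ t : κ → σ, Injective t → univ.pi (U ∘ t) ⊆ W

theorem exists_isRefinement [PerfectSpace X] [Finite σ] [Finite κ] {W : Set (κ → X)}
    (hWo : IsOpen W) (hWd : Dense W) {O : σ → Set X} (hOo : ∀ s, IsOpen (O s))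
    (hOne : ∀ s, (O s).Nonempty) {ε : ℝ≥0∞} (hε : 0 < ε) : ∃ U, IsRefinement W ε O U := by
  obtain ⟨x, hxinj, hxO⟩ := exists_injective_forall_mem_of_isOpen hOo hOne
  obtain ⟨D, hD, hDdisj⟩ := (finite_range x).t2_separation
  have hr : ∀ s, ∃ r, 0 < r ∧ r ≤ ε / 2 ∧ closedEBall (x s) r ⊆ O s ∩ D (x s) := fun s => by
    obtain ⟨δ, hδ, hδsub⟩ := nhds_basis_closedEBall.mem_iff.1
      (inter_mem ((hOo s).mem_nhds (hxO s)) ((hD _).2.mem_nhds (hD _).1))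
    exact ⟨min δ (ε / 2), lt_min hδ (ENNReal.half_pos hε.ne'), min_le_right _ _,
      (closedEBall_subset_closedEBall (min_le_left _ _)).trans hδsub⟩
  choose r hr0 hrε hrsub using hr
  obtain ⟨U, hUo, hUne, hUsub, hUW⟩ := exists_subsets_forall_pi_subset_of_dense hWo hWd
    (U := fun s => eball (x s) (r s)) (fun s => isOpen_eball)
    (fun s => ⟨x s, mem_eball_self (hr0 s)⟩) (toFinite {t : κ → σ | Injective t}) fun t ht => ht
  have hUball : ∀ s, U s ⊆ closedEBall (x s) (r s) := fun s =>
    (hUsub s).trans eball_subset_closedEBall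
  refine ⟨U, hUo, hUne, fun s s' hss' => ?_, fun s => ?_, fun s => ?_, fun t ht => hUW t ht⟩
  · exact (hDdisj (mem_range_self s) (mem_range_self s') (hxinj.ne hss')).mono
      ((hUball s).trans ((hrsub s).trans inter_subset_right))
      ((hUball s').trans ((hrsub s').trans inter_subset_right))
  · calc ediam (U s) ≤ 2 * r s := (ediam_mono (hUball s)).trans ediam_closedEBall_le
      _ ≤ 2 * (ε / 2) := by gcongr; exact hrε s
      _ = ε := ENNReal.mul_div_cancel two_ne_zero ENNReal.ofNat_ne_top
  · exact (closure_minimal (hUball s) isClosed_closedEBall).trans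
      ((hrsub s).trans inter_subset_left)

end Refinement

namespace Mycielski

/-- The sets of level `m + 1` are the children `inl (j, b)` of the sets `j` of level `m`, and one
new set `inr ()`. -/
def Node : ℕ → Type
  | 0 => Empty
  | m + 1 => Node m × Bool ⊕ Unit

instance instFiniteNode : (m : ℕ) → Finite (Node m)
  | 0 => inferInstanceAs (Finite Empty)
  | m + 1 => have := instFiniteNode m; inferInstanceAs (Finite (Node m × Bool ⊕ Unit))

/-- The node reached from the set born at level `i + 1` along `l`, read from right to left as in
`PiNat.res`. -/
def Node.ofList (i : ℕ) : (l : List Bool) → Node (i + l.length + 1)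
  | [] => .inr ()
  | b :: l => .inl (Node.ofList i l, b)

variable {X κ : Type*}

def scheme (U : (m : ℕ) → Node m → Set X) (i : ℕ) (l : List Bool) : Set X :=
  U (i + l.length + 1) (Node.ofList i l)

theorem eventually_exists_mem_of_forall_mem_scheme {U : (m : ℕ) → Node m → Set X} {i : ℕ}
    {g : ℕ → Bool} {y : X} (hy : ∀ n, y ∈ scheme U i (PiNat.res g n)) :
    ∀ᶠ m in atTop, ∃ j : Node (m + 1), y ∈ U (m + 1) j := by
  filter_upwards [eventually_ge_atTop i] with m hm
  obtain ⟨n, rfl⟩ := Nat.exists_eq_add_of_le hm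
  rw [← PiNat.res_length g n]
  exact ⟨_, hy n⟩

def targets {m : ℕ} (U : Node m → Set X) (O : Set X) : Node (m + 1) → Set X :=
  Sum.elim (fun p => U p.1) fun _ => O

section Metric

variable [MetricSpace X]

def IsRefiningSequence (W : ℕ → Set (κ → X)) (O : ℕ → Set X) (U : (m : ℕ) → Node m → Set X) :
    Prop :=
  ∀ m, IsRefinement (W m) (↑(m + 1) : ℝ≥0∞)⁻¹ (targets (U m) (O m)) (U (m + 1))

noncomputable def refiningSequence (W : ℕ → Set (κ → X)) (O : ℕ → Set X) : (m : ℕ) → Node m → Set X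
  | 0 => Empty.elim
  | m + 1 => Classical.epsilon
      (IsRefinement (W m) (↑(m + 1) : ℝ≥0∞)⁻¹ (targets (refiningSequence W O m) (O m)))

theorem isRefiningSequence_refiningSequence [PerfectSpace X] [Finite κ] {W : ℕ → Set (κ → X)}
    {O : ℕ → Set X} (hWo : ∀ m, IsOpen (W m)) (hWd : ∀ m, Dense (W m))
    (hOo : ∀ m, IsOpen (O m)) (hOne : ∀ m, (O m).Nonempty) :
    IsRefiningSequence W O (refiningSequence W O) := by
  suffices step : ∀ m, (∀ j, IsOpen (refiningSequence W O m j)) →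
      (∀ j, (refiningSequence W O m j).Nonempty) → IsRefinement (W m) (↑(m + 1) : ℝ≥0∞)⁻¹
        (targets (refiningSequence W O m) (O m)) (refiningSequence W O (m + 1)) by
    intro m
    induction m with
    | zero => exact step 0 (fun j => j.elim) fun j => j.elim
    | succ m ih => exact step (m + 1) ih.isOpen ih.nonempty
  intro m hopen hne
  refine Classical.epsilon_spec (exists_isRefinement (hWo m) (hWd m) ?_ ?_
    (ENNReal.inv_pos.2 (ENNReal.natCast_ne_top _)))
  · rintro (p | _)
    exacts [hopen p.1, hOo m]
  · rintro (p | _)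
    exacts [hne p.1, hOne m]

namespace IsRefiningSequence

open CantorScheme PiNat

variable {W : ℕ → Set (κ → X)} {O : ℕ → Set X} {U : (m : ℕ) → Node m → Set X}

theorem scheme_nonempty (hU : IsRefiningSequence W O U) (i : ℕ) (l : List Bool) :
    (scheme U i l).Nonempty :=
  (hU (i + l.length)).nonempty _

theorem closureAntitone_scheme (hU : IsRefiningSequence W O U) (i : ℕ) :
    ClosureAntitone (scheme U i) := fun l b =>
  (hU (i + l.length + 1)).closure_subset (.inl (Node.ofList i l, b))

theorem disjoint_scheme (hU : IsRefiningSequence W O U) (i : ℕ) :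
    CantorScheme.Disjoint (scheme U i) := fun l a b hab =>
  (hU (i + l.length + 1)).pairwise_disjoint (show Sum.inl _ ≠ Sum.inl _ by simpa using hab)

theorem vanishingDiam_scheme (hU : IsRefiningSequence W O U) (i : ℕ) :
    VanishingDiam (scheme U i) := fun g => by
  refine tendsto_of_tendsto_of_tendsto_of_le_of_le tendsto_const_nhds
    ENNReal.tendsto_inv_nat_nhds_zero (fun _ => bot_le) fun n => ?_
  calc ediam (scheme U i (res g n)) ≤ (↑(i + n + 1) : ℝ≥0∞)⁻¹ := by
        simpa only [scheme, res_length] using (hU (i + (res g n).length)).ediam_le _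
    _ ≤ (n : ℝ≥0∞)⁻¹ := ENNReal.inv_le_inv.2 (Nat.cast_le.2 (by omega))

theorem scheme_nil_subset (hU : IsRefiningSequence W O U) (i : ℕ) : scheme U i [] ⊆ O i :=
  subset_closure.trans ((hU i).closure_subset (.inr ()))

theorem eventually_mem_of_injective [Finite κ] (hU : IsRefiningSequence W O U) {x : κ → X}
    (hx : Injective x) (hxU : ∀ k, ∀ᶠ m in atTop, ∃ j : Node (m + 1), x k ∈ U (m + 1) j) :
    ∀ᶠ m in atTop, x ∈ W m := by
  have hsep : ∀ᶠ m : ℕ in atTop, ∀ k k', k ≠ k' → (↑(m + 1) : ℝ≥0∞)⁻¹ < edist (x k) (x k') := by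
    simp only [eventually_all]
    intro k k' hkk'
    have := ENNReal.tendsto_inv_nat_nhds_zero.eventually (gt_mem_nhds (edist_pos.2 (hx.ne hkk')))
    exact (tendsto_add_atTop_nat 1).eventually this
  filter_upwards [hsep, eventually_all.2 hxU] with m hsep hmem
  choose t ht using hmem
  have htinj : Injective t := fun k k' htk => by
    by_contra hkk'
    refine (hsep k k' hkk').not_ge ?_
    calc edist (x k) (x k') ≤ ediam (U (m + 1) (t k)) := edist_le_ediam_of_mem (ht k) (htk ▸ ht k')
      _ ≤ (↑(m + 1) : ℝ≥0∞)⁻¹ := (hU m).ediam_le _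
  exact (hU m).pi_subset t htinj fun k _ => ht k

end IsRefiningSequence

end Metric

end Mycielski

theorem CantorScheme.exists_continuous_injective_forall_mem {β α : Type*} [TopologicalSpace β]
    [DiscreteTopology β] [PseudoMetricSpace α] [CompleteSpace α] {A : List β → Set α}
    (hanti : ClosureAntitone A) (hdiam : VanishingDiam A) (hdisj : CantorScheme.Disjoint A)
    (hne : ∀ l, (A l).Nonempty) :
    ∃ f : (ℕ → β) → α, Continuous f ∧ Injective f ∧ ∀ x n, f x ∈ A (PiNat.res x n) := by
  have hdom : ∀ x, x ∈ (inducedMap A).1 := by simp [hanti.map_of_vanishingDiam hdiam hne]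
  refine ⟨fun x => (inducedMap A).2 ⟨x, hdom x⟩, hdiam.map_continuous.comp (by fun_prop),
    fun x y hxy => ?_, fun x => map_mem ⟨x, hdom x⟩⟩
  simpa using hdisj.map_injective hxy

theorem exists_seq_nonempty_isOpen_subset_of_isOpen (X : Type*) [TopologicalSpace X]
    [SecondCountableTopology X] [Nonempty X] :
    ∃ O : ℕ → Set X, (∀ m, IsOpen (O m)) ∧ (∀ m, (O m).Nonempty) ∧
      ∀ V, IsOpen V → V.Nonempty → ∃ m, O m ⊆ V := by
  obtain ⟨b, hbc, hb0, hb⟩ := TopologicalSpace.exists_countable_basis X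
  obtain ⟨o, hob, -⟩ := hb.exists_subset_of_mem_open (mem_univ (Classical.arbitrary X)) isOpen_univ
  obtain ⟨O, rfl⟩ := hbc.exists_eq_range ⟨o, hob⟩
  refine ⟨O, fun m => hb.isOpen (mem_range_self m),
    fun m => nonempty_iff_ne_empty.2 fun h => hb0 (h ▸ mem_range_self m), fun V hV ⟨x, hx⟩ => ?_⟩
  obtain ⟨-, ⟨m, rfl⟩, -, hmV⟩ := hb.exists_subset_of_mem_open hx hV
  exact ⟨m, hmV⟩

theorem IsGδ.exists_cantor_sets_injective_mem {X κ : Type*} [MetricSpace X] [CompleteSpace X]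
    [SecondCountableTopology X] [PerfectSpace X] [Nonempty X] [Finite κ] {R : Set (κ → X)}
    (hR : IsGδ R) (hRd : Dense R) :
    ∃ C : ℕ → Set X, (∀ i, Nonempty (C i ≃ₜ (ℕ → Bool))) ∧ Dense (⋃ i, C i) ∧
      ∀ x : κ → X, Injective x → (∀ k, x k ∈ ⋃ i, C i) → x ∈ R := by
  obtain ⟨V, hVo, rfl⟩ := hR.eq_iInter_nat
  have hVd : ∀ q, Dense (V q) := fun q => hRd.mono (iInter_subset V q)
  obtain ⟨O, hOo, hOne, hO⟩ := exists_seq_nonempty_isOpen_subset_of_isOpen X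
  have hU := Mycielski.isRefiningSequence_refiningSequence (W := fun m => ⋂ q ≤ m, V q) (O := O)
    (fun m => (finite_Iic m).isOpen_biInter fun q _ => hVo q) (dense_biInter_le_of_isOpen hVo hVd)
    hOo hOne
  choose f hfc hfinj hfmem using fun i => CantorScheme.exists_continuous_injective_forall_mem
    (hU.closureAntitone_scheme i) (hU.vanishingDiam_scheme i) (hU.disjoint_scheme i)
    (hU.scheme_nonempty i)
  refine ⟨fun i => range (f i),
    fun i => ⟨((hfc i).isClosedEmbedding (hfinj i)).isEmbedding.toHomeomorph.symm⟩, ?_, ?_⟩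
  · refine dense_iff_inter_open.2 fun W hW hne => ?_
    obtain ⟨m, hm⟩ := hO W hW hne
    let g : ℕ → Bool := fun _ => false
    exact ⟨f m g, hm (hU.scheme_nil_subset m (hfmem m g 0)), mem_iUnion_of_mem m (mem_range_self g)⟩
  · intro x hx hxC
    choose i g hxg using fun k => by simpa only [mem_iUnion, mem_range] using hxC k
    have hxW := hU.eventually_mem_of_injective hx fun k =>
      Mycielski.eventually_exists_mem_of_forall_mem_scheme fun n => hxg k ▸ hfmem (i k) (g k) n
    refine mem_iInter.2 fun q => ?_
    obtain ⟨m, hxm, hqm⟩ := (hxW.and (eventually_ge_atTop q)).exists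
    exact mem_iInter₂.1 hxm q hqm

theorem mycielski_theorem_general
    {X : Type*} [MetricSpace X] [CompactSpace X] [Nonempty X]
    (hperf : Perfect (Set.univ : Set X))
    (n : ℕ) (R : Set (Fin n → X)) (hR : IsGδ R) (hRd : Dense R) :
    ∃ C : ℕ → Set X,
      (∀ i : ℕ, Nonempty (C i ≃ₜ (ℕ → Bool))) ∧
      Dense (⋃ i, C i) ∧
      ∀ x : Fin n → X, Function.Injective x → (∀ i, x i ∈ ⋃ j, C j) → x ∈ R := by
  have : PerfectSpace X := ⟨hperf.acc⟩
  exact hR.exists_cantor_sets_injective_mem hRd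

theorem mycielski_theorem
    {X : Type*} [MetricSpace X] [CompactSpace X] [Nonempty X]
    (hperf : Perfect (Set.univ : Set X))
    (n : ℕ) (hn : 1 ≤ n) (R : Set (Fin n → X)) (hR : IsGδ R) (hRd : Dense R) :
    ∃ C : ℕ → Set X,
      (∀ i : ℕ, Nonempty (C i ≃ₜ (ℕ → Bool))) ∧
      Dense (⋃ i, C i) ∧
      ∀ x : Fin n → X, Function.Injective x → (∀ i, x i ∈ ⋃ j, C j) → x ∈ R :=
  mycielski_theorem_general hperf n R hR hRd
end

section
/- Let (X,T) be a dynamical system on a compact metric space. The induced hyperspace system (K(X), T_K) is proximal if and only if ⋂_{n=1}^∞ T^n X is a singleton. -/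
/-!
Write `Y = ⋂ₙ Tⁿ X`, a nonempty compact set. If `Y = {p}`, the decreasing compact sets `Tⁿ X`
eventually lie in every ball around `p`, so `Tⁿ A → {p}` in the Hausdorff metric for every `A`,
and any two orbits of `T_K` are asymptotic. Conversely, for `p, q ∈ Y ⊆ Tⁿ X` both points are
within `d_H(Tⁿ X, {Tⁿ p})` of `Tⁿ p`, so proximality of the pair `(X, {p})` forces `q = p`.
-/

open TopologicalSpace Metric Set Filter Topology

namespace TopologicalSpace.NonemptyCompacts

variable {X : Type*} [MetricSpace X]

lemma coe_iterate_eq_image_iterate {T : X → X} {TK : NonemptyCompacts X → NonemptyCompacts X}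
    (hTK : ∀ A : NonemptyCompacts X, (TK A : Set X) = T '' A) (n : ℕ) (A : NonemptyCompacts X) :
    (TK^[n] A : Set X) = T^[n] '' A := by
  have h : Function.Semiconj ((↑) : NonemptyCompacts X → Set X) TK (image T) := hTK
  rw [image_iterate_eq]
  exact h.iterate_right n A

lemma dist_le_dist_singleton {A : NonemptyCompacts X} {x : X} (hx : x ∈ A) (y : X) :
    dist x y ≤ dist A {y} := by
  simpa [infDist_zero_of_mem hx, infDist_singleton] using
    (lipschitz_infDist_set x).dist_le_mul A {y}

lemma dist_le_two_mul_dist_singleton {A : NonemptyCompacts X} {x y : X} (hx : x ∈ A)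
    (hy : y ∈ A) (z : X) : dist x y ≤ 2 * dist A {z} := by
  calc dist x y ≤ dist x z + dist y z := dist_triangle_right x y z
    _ ≤ 2 * dist A {z} := by
      linarith [dist_le_dist_singleton hx z, dist_le_dist_singleton hy z]

lemma tendsto_singleton_of_eventually_subset_ball {ι : Type*} {l : Filter ι}
    {A : ι → NonemptyCompacts X} {p : X}
    (h : ∀ ε > 0, ∀ᶠ i in l, (A i : Set X) ⊆ ball p ε) : Tendsto A l (𝓝 {p}) := by
  refine tendsto_nhds.2 fun ε hε => (h (ε / 2) (half_pos hε)).mono fun i hi => ?_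
  rw [Metric.NonemptyCompacts.dist_eq]
  refine (hausdorffDist_le_of_mem_dist (half_pos hε).le
    (fun x hx => ⟨p, Set.mem_singleton p, (hi hx).le⟩) fun _ hy => ?_).trans_lt (half_lt_self hε)
  obtain ⟨x, hx⟩ := (A i).nonempty
  exact ⟨x, hx, by rw [hy, dist_comm]; exact (hi hx).le⟩

end TopologicalSpace.NonemptyCompacts

section RangeIterate

variable {X : Type*}

lemma antitone_range_iterate (T : X → X) : Antitone fun n => range T^[n] :=
  antitone_nat_of_succ_le fun n => by
    rw [Function.iterate_succ]
    exact range_comp_subset_range _ _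

lemma biInter_ge_one_image_iterate_univ (T : X → X) :
    ⋂ n ≥ 1, T^[n] '' univ = ⋂ n, range T^[n] := by
  simp only [image_univ]
  rw [iInter_ge_eq_iInter_nat_add, (antitone_range_iterate T).iInter_nat_add]

variable [TopologicalSpace X] [CompactSpace X] {T : X → X}

lemma isCompact_range_iterate (hT : Continuous T) (n : ℕ) : IsCompact (range T^[n]) :=
  isCompact_range (hT.iterate n)

variable [T2Space X]

lemma nonempty_iInter_range_iterate [Nonempty X] (hT : Continuous T) :
    (⋂ n, range T^[n]).Nonempty :=
  IsCompact.nonempty_iInter_of_sequence_nonempty_isCompact_isClosed _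
    (fun n => antitone_range_iterate T n.le_succ) (fun _ => range_nonempty _)
    (isCompact_range_iterate hT 0) fun n => (isCompact_range_iterate hT n).isClosed

lemma eventually_range_iterate_subset (hT : Continuous T) {U : Set X}
    (hU : ∀ x ∈ ⋂ n, range T^[n], U ∈ 𝓝 x) : ∀ᶠ n in atTop, range T^[n] ⊆ U := by
  obtain ⟨N, hN⟩ := exists_subset_nhds_of_isCompact (antitone_range_iterate T).directed_ge
    (isCompact_range_iterate hT) hU
  exact eventually_atTop.2 ⟨N, fun n hn => (antitone_range_iterate T hn).trans hN⟩

end RangeIterate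

lemma le_liminf_dist_of_forall_le {Y : Type*} [PseudoMetricSpace Y] [BoundedSpace Y]
    {u v : ℕ → Y} {c : ℝ} (h : ∀ n, c ≤ dist (u n) (v n)) :
    c ≤ liminf (fun n => dist (u n) (v n)) atTop :=
  le_liminf_of_le (isCoboundedUnder_ge_of_le atTop fun n =>
    dist_le_diam_of_mem BoundedSpace.bounded_univ (mem_univ (u n)) (mem_univ (v n))) (.of_forall h)

section HyperspaceIterate

variable {X : Type*} [MetricSpace X] [CompactSpace X] {T : X → X}
  {TK : NonemptyCompacts X → NonemptyCompacts X}

lemma dist_le_two_mul_dist_iterate_top_iterate_singleton [Nonempty X]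
    (hTK : ∀ A : NonemptyCompacts X, (TK A : Set X) = T '' A) {p q : X}
    (hp : p ∈ ⋂ n, range T^[n]) (hq : q ∈ ⋂ n, range T^[n]) (n : ℕ) :
    dist q p ≤ 2 * dist (TK^[n] ⊤) (TK^[n] {p}) := by
  have hiter := NonemptyCompacts.coe_iterate_eq_image_iterate hTK n
  have hsingle : TK^[n] {p} = {T^[n] p} := NonemptyCompacts.ext (by simp [hiter])
  have hmem : ∀ x ∈ ⋂ n, range T^[n], x ∈ TK^[n] ⊤ := fun x hx => by
    rw [← SetLike.mem_coe, hiter, NonemptyCompacts.coe_top, image_univ]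
    exact mem_iInter.1 hx n
  rw [hsingle]
  exact NonemptyCompacts.dist_le_two_mul_dist_singleton (hmem q hq) (hmem p hp) (T^[n] p)

lemma tendsto_iterate_nhds_singleton (hT : Continuous T)
    (hTK : ∀ A : NonemptyCompacts X, (TK A : Set X) = T '' A) {p : X}
    (hp : ⋂ n, range T^[n] = {p}) (A : NonemptyCompacts X) :
    Tendsto (fun n => TK^[n] A) atTop (𝓝 {p}) := by
  refine NonemptyCompacts.tendsto_singleton_of_eventually_subset_ball fun ε hε => ?_
  have hball : ∀ x ∈ ⋂ n, range T^[n], ball p ε ∈ 𝓝 x := by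
    rw [hp]
    rintro x rfl
    exact ball_mem_nhds x hε
  filter_upwards [eventually_range_iterate_subset hT hball] with n hn
  rw [NonemptyCompacts.coe_iterate_eq_image_iterate hTK]
  exact (image_subset_range _ _).trans hn

end HyperspaceIterate

theorem hyperspace_proximal_iff_intersection_singleton
    {X : Type*} [MetricSpace X] [CompactSpace X] [Nonempty X]
    (T : X → X) (hT : Continuous T)
    (TK : NonemptyCompacts X → NonemptyCompacts X)
    (hTK : ∀ A : NonemptyCompacts X, (TK A : Set X) = T '' (A : Set X)) :
    (∀ A B : NonemptyCompacts X,
      Filter.liminf (fun n : ℕ => dist (TK^[n] A) (TK^[n] B)) Filter.atTop = 0) ↔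
    (∃ p : X, ⋂ n ≥ 1, T^[n] '' (Set.univ : Set X) = {p}) := by
  rw [biInter_ge_one_image_iterate_univ]
  constructor
  · intro hprox
    obtain ⟨p, hp⟩ := nonempty_iInter_range_iterate hT
    refine ⟨p, eq_singleton_iff_unique_mem.2 ⟨hp, fun q hq => ?_⟩⟩
    have hhalf : dist q p / 2 ≤ 0 := (hprox ⊤ {p}).symm ▸ le_liminf_dist_of_forall_le fun n => by
      linarith [dist_le_two_mul_dist_iterate_top_iterate_singleton hTK hp hq n]
    exact dist_le_zero.1 (by linarith)
  · rintro ⟨p, hp⟩ A B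
    simpa using ((tendsto_iterate_nhds_singleton hT hTK hp A).dist
      (tendsto_iterate_nhds_singleton hT hTK hp B)).liminf_eq
end
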